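/- Let Δ = {(η₁,η₂) ∈ ℝ² : η₁ > 0, η₂ > 0, η₁ + η₂ < 1} and ψ(η₁,η₂) = ¼(η₁ ln η₁ + η₂ ln η₂ + (1 − η₁ − η₂) ln(1 − η₁ − η₂)) on Δ. Then, writing η₃ = 1 − η₁ − η₂, the gradient is ∇ψ(η) = (¼ ln(η₁/η₃), ¼ ln(η₂/η₃)), and the dual Hessian potential satisfies ⟨∇ψ(η), η⟩ − ψ(η) = −¼ ln(1 − η₁ − η₂) for all η ∈ Δ. (These are the dual Hessian coordinates and dual Hessian potential of the generic system (s2) on the round 2-sphere.) -/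

import Mathlib

/-!
`4ψ` is the negative entropy `∑ ηᵢ log ηᵢ` of the point `(η₁, η₂, η₃)` of the simplex, with
`η₃ = 1 - η₁ - η₂`, and it is symmetric in `η₁, η₂`. Differentiating `η log η` gives
`4 ∂₁ψ = log η₁ - log η₃`, and `∂₂ψ` follows by symmetry. In `⟨∇ψ, η⟩ - ψ` the terms `ηᵢ log ηᵢ`
cancel and what remains is `-(η₁ + η₂ + η₃) log η₃ / 4 = -log η₃ / 4`.
-/

open Real Set

/-- The Hessian potential of the generic system (s2) on the round 2-sphere
in its Hessian coordinates, defined on the open simplex. -/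
noncomputable def ψ (a b : ℝ) : ℝ :=
  (a * log a + b * log b + (1 - a - b) * log (1 - a - b)) / 4

/-- Partial derivative with respect to the first variable. -/
noncomputable def d1 (f : ℝ → ℝ → ℝ) (a b : ℝ) : ℝ := deriv (fun s => f s b) a

/-- Partial derivative with respect to the second variable. -/
noncomputable def d2 (f : ℝ → ℝ → ℝ) (a b : ℝ) : ℝ := deriv (fun t => f a t) b

lemma d2_eq_d1_flip (f : ℝ → ℝ → ℝ) (a b : ℝ) : d2 f a b = d1 (flip f) b a := rfl

lemma flip_ψ : flip ψ = ψ := by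
  ext a b
  simp only [flip, ψ]
  ring_nf

lemma hasDerivAt_ψ_left {a b : ℝ} (ha : a ≠ 0) (hc : 1 - a - b ≠ 0) :
    HasDerivAt (fun s => ψ s b) ((log a - log (1 - a - b)) / 4) a := by
  have h_third : HasDerivAt (fun s => 1 - s - b) (-1) a :=
    ((hasDerivAt_id a).const_sub 1).sub_const b |>.congr_deriv (by simp)
  have h_sum := (((hasDerivAt_mul_log ha).add_const (b * log b)).add
    ((hasDerivAt_mul_log hc).comp a h_third)).div_const 4
  exact h_sum.congr_deriv (by ring)

lemma d1_ψ {a b : ℝ} (ha : a ≠ 0) (hc : 1 - a - b ≠ 0) :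
    d1 ψ a b = (1 / 4) * log (a / (1 - a - b)) := by
  rw [d1, (hasDerivAt_ψ_left ha hc).deriv, log_div ha hc]
  ring

lemma d2_ψ {a b : ℝ} (hb : b ≠ 0) (hc : 1 - a - b ≠ 0) :
    d2 ψ a b = (1 / 4) * log (b / (1 - a - b)) := by
  have hc' : 1 - b - a = 1 - a - b := by ring
  rw [d2_eq_d1_flip, flip_ψ, d1_ψ hb (hc' ▸ hc), hc']

lemma ψ_legendre {a b : ℝ} (ha : a ≠ 0) (hb : b ≠ 0) (hc : 1 - a - b ≠ 0) :
    (1 / 4) * log (a / (1 - a - b)) * a + (1 / 4) * log (b / (1 - a - b)) * b - ψ a b =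
      -(1 / 4) * log (1 - a - b) := by
  rw [log_div ha hc, log_div hb hc, ψ]
  ring

/-- For the generic system (s2): writing `η₃ = 1 − η₁ − η₂`, the gradient of
`ψ` (the dual Hessian coordinates) is `∇ψ(η) = (¼ ln(η₁/η₃), ¼ ln(η₂/η₃))`,
and the dual Hessian potential is
`⟨∇ψ(η), η⟩ − ψ(η) = −¼ ln(1 − η₁ − η₂)` on the open simplex. -/
theorem s2_dual_coordinates_and_potential :
    ∀ a b : ℝ, 0 < a → 0 < b → a + b < 1 →
      d1 ψ a b = (1 / 4) * log (a / (1 - a - b)) ∧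
      d2 ψ a b = (1 / 4) * log (b / (1 - a - b)) ∧
      d1 ψ a b * a + d2 ψ a b * b - ψ a b = -(1 / 4) * log (1 - a - b) := by
  intro a b ha hb hab
  have hc : 1 - a - b ≠ 0 := by linarith
  rw [d1_ψ ha.ne' hc, d2_ψ hb.ne' hc]
  exact ⟨rfl, rfl, ψ_legendre ha.ne' hb.ne' hc⟩
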